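/- Let 0 < w_1 ≤ ... ≤ w_k with at least two distinct values, c_i > 0, and define P(α) = k ln α − k ln(∑_{i=1}^k c_i w_i^α) + (α−1) ∑_{i=1}^k ln w_i for α > 0. Then P(α) → −∞ as α → 0⁺ and P(α) → −∞ as α → ∞. -/

import Mathlib

/-!
Near `0`, the term `k log α` tends to `-∞` while the rest of `P` is continuous at `0`, since
`A(0) = ∑ cᵢ > 0`. Near `∞`, keeping only the largest weight `w_k` in `A` gives
`log A(α) ≥ log c_k + α log w_k`, so `P(α) ≤ k log α + (∑ log wᵢ - k log w_k) α + const`;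
the slope is negative because some `wᵢ < w_k`, and linear decay beats `k log α`.
-/

open Finset Real Filter
open scoped Topology

lemma tendsto_mul_log_add_mul_atTop_atBot (a : ℝ) {m : ℝ} (hm : m < 0) :
    Tendsto (fun x : ℝ => a * log x + m * x) atTop atBot := by
  have hslope : Tendsto (fun x : ℝ => a * (log x / x) + m) atTop (𝓝 m) := by
    simpa using (isLittleO_log_id_atTop.tendsto_div_nhds_zero.const_mul a).add_const m
  refine (tendsto_id.atTop_mul_neg hm hslope).congr' ?_
  filter_upwards [eventually_gt_atTop 0] with x hx
  dsimp only [id]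
  field_simp

section WeightedPowerSum

variable {ι : Type*} [Fintype ι] {c w : ι → ℝ}

lemma continuous_sum_mul_rpow (hw : ∀ i, 0 < w i) :
    Continuous fun α : ℝ => ∑ i, c i * w i ^ α :=
  continuous_finsetSum _ fun i _ => continuous_const.mul (continuous_const_rpow (hw i).ne')

lemma sum_mul_rpow_pos [Nonempty ι] (hw : ∀ i, 0 < w i) (hc : ∀ i, 0 < c i) (α : ℝ) :
    0 < ∑ i, c i * w i ^ α :=
  sum_pos (fun i _ => mul_pos (hc i) (rpow_pos_of_pos (hw i) α)) univ_nonempty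

lemma log_add_mul_log_le_log_sum_mul_rpow (hw : ∀ i, 0 < w i) (hc : ∀ i, 0 < c i)
    (j : ι) (α : ℝ) : log (c j) + α * log (w j) ≤ log (∑ i, c i * w i ^ α) := by
  have hterm : ∀ i, 0 < c i * w i ^ α := fun i => mul_pos (hc i) (rpow_pos_of_pos (hw i) α)
  have hle : c j * w j ^ α ≤ ∑ i, c i * w i ^ α :=
    single_le_sum (f := fun i => c i * w i ^ α) (fun i _ => (hterm i).le) (mem_univ j)
  calc log (c j) + α * log (w j) = log (c j * w j ^ α) := by
        rw [log_mul (hc j).ne' (rpow_pos_of_pos (hw j) α).ne', log_rpow (hw j)]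
    _ ≤ log (∑ i, c i * w i ^ α) := log_le_log (hterm j) hle

lemma tendsto_log_sub_log_sum_mul_rpow_nhdsGT_zero [Nonempty ι] (hw : ∀ i, 0 < w i)
    (hc : ∀ i, 0 < c i) {a : ℝ} (ha : 0 < a) (b : ℝ) :
    Tendsto (fun α : ℝ => a * log α - a * log (∑ i, c i * w i ^ α) + (α - 1) * b)
      (𝓝[>] 0) atBot := by
  have hlog : Tendsto (fun α : ℝ => a * log α) (𝓝[>] 0) atBot :=
    tendsto_log_nhdsGT_zero.const_mul_atBot ha
  have hcont : ContinuousAt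
      (fun α : ℝ => -(a * log (∑ i, c i * w i ^ α)) + (α - 1) * b) 0 :=
    ((((continuous_sum_mul_rpow hw).continuousAt.log
      (sum_mul_rpow_pos hw hc 0).ne').const_mul a).neg).add
      ((continuousAt_id.sub continuousAt_const).mul continuousAt_const)
  exact (hlog.atBot_add (hcont.tendsto.mono_left nhdsWithin_le_nhds)).congr
    fun α => by ring

lemma tendsto_log_sub_log_sum_mul_rpow_atTop (hw : ∀ i, 0 < w i) (hc : ∀ i, 0 < c i)
    {a b : ℝ} (ha : 0 ≤ a) (j : ι) (hb : b < a * log (w j)) :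
    Tendsto (fun α : ℝ => a * log α - a * log (∑ i, c i * w i ^ α) + (α - 1) * b)
      atTop atBot := by
  have hbound : ∀ α : ℝ, a * log α - a * log (∑ i, c i * w i ^ α) + (α - 1) * b ≤
      a * log α + (b - a * log (w j)) * α + (-b - a * log (c j)) := fun α => by
    nlinarith [log_add_mul_log_le_log_sum_mul_rpow hw hc j α]
  exact tendsto_atBot_mono hbound
    ((tendsto_mul_log_add_mul_atTop_atBot a (by linarith)).atBot_add tendsto_const_nhds)

end WeightedPowerSum

theorem stmt_4 (k : ℕ) (hk : 2 ≤ k) (w c : Fin k → ℝ)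
    (hw : ∀ i, 0 < w i) (hwmono : Monotone w)
    (hne : w ⟨0, by omega⟩ < w ⟨k - 1, by omega⟩) (hc : ∀ i, 0 < c i) :
    Tendsto
      (fun α : ℝ =>
        (k : ℝ) * Real.log α - (k : ℝ) * Real.log (∑ i, c i * w i ^ α)
          + (α - 1) * ∑ i, Real.log (w i))
      (nhdsWithin 0 (Set.Ioi 0)) atBot ∧
    Tendsto
      (fun α : ℝ =>
        (k : ℝ) * Real.log α - (k : ℝ) * Real.log (∑ i, c i * w i ^ α)
          + (α - 1) * ∑ i, Real.log (w i))
      atTop atBot := by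
  have : Nonempty (Fin k) := ⟨⟨0, by omega⟩⟩
  refine ⟨tendsto_log_sub_log_sum_mul_rpow_nhdsGT_zero hw hc (by positivity) _,
    tendsto_log_sub_log_sum_mul_rpow_atTop hw hc (Nat.cast_nonneg k) ⟨k - 1, by omega⟩ ?_⟩
  calc ∑ i, log (w i) < ∑ _i : Fin k, log (w ⟨k - 1, by omega⟩) :=
        sum_lt_sum
          (fun i _ => log_le_log (hw i) (hwmono (Fin.le_def.2 (Nat.le_sub_one_of_lt i.isLt))))
          ⟨⟨0, by omega⟩, mem_univ _, log_lt_log (hw _) hne⟩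
    _ = k * log (w ⟨k - 1, by omega⟩) := by simp
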